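/- Every root reflection of D∞ is realized: for every α = (a,b) ∈ ℕ² with |a − b| = 1, there is a unique reflection s_α ∈ D∞ with ℓ(s_α) = a + b and φ(s_α) = (a, b). -/

import Mathlib

open DihedralGroup CoxeterSystem

/-- The infinite dihedral group `D∞`, realized as `DihedralGroup 0`. -/
abbrev Dinf := DihedralGroup 0

/-- View an element of `ZMod 0` as an integer. -/
def toInt (k : ZMod 0) : ℤ := k

/-- The Coxeter matrix of type `A₁⁽¹⁾`: diagonal entries `1`, off-diagonal
entries `0` (encoding infinite order). -/
def Mmat : CoxeterMatrix (Fin 2) where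
  M := !![1, 0; 0, 1]
  isSymm := by decide
  diagonal := by decide
  off_diagonal := by intro i i' h; fin_cases i <;> fin_cases i' <;> simp_all

/-- The generator index `0` (resp. `1`) corresponds to the geometric
reflection `s₀ = sr 0` (resp. `s₁ = sr 1`). -/
def toGen : Fin 2 → Dinf := fun i => if i = 0 then sr 0 else sr 1

/-- The product in `D∞` of a word in the two generators `s₀, s₁`. -/
def wprod (w : List (Fin 2)) : Dinf := (w.map toGen).prod

/-- The explicit reduced word (an alternating word in `s₀` and `s₁`) for an
element of `D∞`. -/
def reducedWord : Dinf → List (Fin 2)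
  | .r k => if 0 ≤ toInt k then alternatingWord 0 1 (2 * (toInt k).natAbs)
      else alternatingWord 1 0 (2 * (toInt k).natAbs)
  | .sr k => if 0 < toInt k then alternatingWord 0 1 (2 * (toInt k).natAbs - 1)
      else alternatingWord 1 0 (2 * (toInt k).natAbs + 1)

/-- The degree map `φ : D∞ → ℕ²`, counting occurrences of `s₀` and of `s₁` in
a reduced word. -/
def φ (g : Dinf) : ℕ × ℕ := ((reducedWord g).count 0, (reducedWord g).count 1)

/-- The explicit (computable) length function on `D∞`. -/
def cLength : Dinf → ℕ
  | .r k => 2 * (toInt k).natAbs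
  | .sr k => if 0 < toInt k then 2 * (toInt k).natAbs - 1 else 2 * (toInt k).natAbs + 1

/-- `t` is a reflection of `D∞`, i.e. an element of the form `sr k`. -/
def IsReflectionD (t : Dinf) : Prop := ∃ k, t = sr k

/-- The moment graph of `D∞` has an edge `u → v` of degree `α` iff
`v = u * s_α` where `s_α` is the (root) reflection of degree `α`. -/
def IsEdge (u v : Dinf) (α : ℕ × ℕ) : Prop := ∃ t : Dinf, IsReflectionD t ∧ φ t = α ∧ v = u * t

/-- Increasing chains in the moment graph of `D∞`: the Coxeter length strictly
increases along each edge, and the degree of the chain is the sum of the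
degrees of its edges. -/
inductive Chain (cs : CoxeterSystem Mmat Dinf) : Dinf → Dinf → ℕ × ℕ → Prop where
  | refl (u : Dinf) : Chain cs u u 0
  | step {u v w : Dinf} {d α : ℕ × ℕ} : Chain cs u v d → IsEdge v w α →
      cs.length v < cs.length w → Chain cs u w (d + α)

/-- Bruhat order on `D∞`: `u ≤ v` iff there is an increasing chain from `u`
to `v` in the moment graph. -/
def BruhatLE (cs : CoxeterSystem Mmat Dinf) (u v : Dinf) : Prop := ∃ d, Chain cs u v d

/-- Strict Bruhat order on `D∞`. -/
def BruhatLT (cs : CoxeterSystem Mmat Dinf) (u v : Dinf) : Prop :=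
  BruhatLE cs u v ∧ u ≠ v

/-- `v` is reachable from `u` by an increasing chain of degree at most `d`. -/
def Reachable (cs : CoxeterSystem Mmat Dinf) (u : Dinf) (d : ℕ × ℕ) (v : Dinf) : Prop :=
  ∃ d', d' ≤ d ∧ Chain cs u v d'

/-- The algebraic set `A_d(u) = { v | ℓ(uv) = ℓ(u) + ℓ(v), φ(v) ≤ d }`. -/
def Ad (cs : CoxeterSystem Mmat Dinf) (u : Dinf) (d : ℕ × ℕ) : Set Dinf :=
  { v | cs.length (u * v) = cs.length u + cs.length v ∧ φ v ≤ d }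

/-- `w` is maximal in `S` with respect to the Bruhat order. -/
def IsMaximalIn (cs : CoxeterSystem Mmat Dinf) (w : Dinf) (S : Set Dinf) : Prop :=
  w ∈ S ∧ ∀ v ∈ S, ¬ BruhatLT cs w v

/-- The combinatorial curve neighborhood `Γ_d(u)`: the Bruhat-maximal elements
among those reachable from `u` by an increasing chain of degree `≤ d`. -/
def CurveNeighborhood (cs : CoxeterSystem Mmat Dinf) (u : Dinf) (d : ℕ × ℕ) : Set Dinf :=
  { v | Reachable cs u d v ∧ ∀ v', Reachable cs u d v' → ¬ BruhatLT cs v v' }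

-- Auxiliary lemmas
lemma r_pow' (j : ℕ) (x : ℤ) : (r x : Dinf)^j = r (j*x : ℤ) := by
  induction j with
  | zero => simp; rfl
  | succ n ih => rw [pow_succ, ih]; erw [r_mul_r]; congr 1; show (n:ℤ)*x + x = ((n+1:ℕ):ℤ)*x; push_cast; ring

lemma wordProd_eq (cs : CoxeterSystem Mmat Dinf) (h0 : cs.simple 0 = sr 0)
    (h1 : cs.simple 1 = sr 1) (w : List (Fin 2)) : cs.wordProd w = wprod w := by
  induction w with
  | nil => simp [wprod, cs.wordProd_nil]
  | cons i w ih =>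
    rw [cs.wordProd_cons, ih]
    have : cs.simple i = toGen i := by fin_cases i <;> simp [toGen, h0, h1]
    simp [wprod, this]

@[simp] lemma toInt_add (x y : ZMod 0) : toInt (x + y) = toInt x + toInt y := rfl
@[simp] lemma toInt_sub (x y : ZMod 0) : toInt (x - y) = toInt x - toInt y := rfl
@[simp] lemma toInt_zero : toInt 0 = 0 := rfl
@[simp] lemma toInt_one : toInt 1 = 1 := rfl

lemma cLength_gen_mul_le (i : Fin 2) (g : Dinf) : cLength (toGen i * g) ≤ cLength g + 1 := by
  have hi : toGen i = sr 0 ∨ toGen i = sr 1 := by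
    fin_cases i <;> simp [toGen]
  rcases hi with hi | hi <;> rw [hi] <;> rcases g with k | k
  · rw [sr_mul_r]
    simp only [cLength, toInt_add, toInt_zero]
    show (if 0 < (0:ℤ) + toInt k then 2 * ((0:ℤ) + toInt k).natAbs - 1 else 2 * ((0:ℤ) + toInt k).natAbs + 1) ≤ 2 * (toInt k).natAbs + 1
    generalize toInt k = n
    split_ifs <;> omega
  · rw [sr_mul_sr]
    simp only [cLength, toInt_sub, toInt_zero]
    generalize toInt k = n
    split_ifs <;> omega
  · rw [sr_mul_r]
    simp only [cLength, toInt_add, toInt_one]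
    show (if 0 < (1:ℤ) + toInt k then 2 * ((1:ℤ) + toInt k).natAbs - 1 else 2 * ((1:ℤ) + toInt k).natAbs + 1) ≤ 2 * (toInt k).natAbs + 1
    generalize toInt k = n
    split_ifs <;> omega
  · rw [sr_mul_sr]
    simp only [cLength, toInt_sub, toInt_one]
    generalize toInt k = n
    split_ifs <;> omega

@[simp] lemma toInt_coe (x : ℤ) : toInt x = x := rfl

lemma cLength_wprod_le (w : List (Fin 2)) : cLength (wprod w) ≤ w.length := by
  induction w with
  | nil => simp [wprod, cLength]; rfl
  | cons i w ih =>
    have : wprod (i :: w) = toGen i * wprod w := by simp [wprod]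
    rw [this, List.length_cons]
    exact (cLength_gen_mul_le i (wprod w)).trans (by omega)

lemma prod_reducedWord (cs : CoxeterSystem Mmat Dinf) (h0 : cs.simple 0 = sr 0)
    (h1 : cs.simple 1 = sr 1) (t : Dinf) : cs.wordProd (reducedWord t) = t := by
  have hA : ∀ m, cs.wordProd (alternatingWord 0 1 m)
      = (if Even m then 1 else sr 1) * (sr 0 * sr 1) ^ (m / 2) := by
    intro m; rw [cs.prod_alternatingWord_eq_mul_pow 0 1 m, h0, h1]
  have hB : ∀ m, cs.wordProd (alternatingWord 1 0 m)
      = (if Even m then 1 else sr 0) * (sr 1 * sr 0) ^ (m / 2) := by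
    intro m; rw [cs.prod_alternatingWord_eq_mul_pow 1 0 m, h1, h0]
  have e01 : (sr 0 * sr 1 : Dinf) = r (1 : ℤ) := by
    rw [sr_mul_sr]; congr 1
  have e10 : (sr 1 * sr 0 : Dinf) = r (-1 : ℤ) := by
    rw [sr_mul_sr]; congr 1
  rcases t with k | k
  · by_cases h : 0 ≤ toInt k
    · rw [reducedWord, if_pos h, hA, if_pos (even_two_mul _), one_mul,
        Nat.mul_div_cancel_left _ (by norm_num), e01, r_pow']
      congr 1; show ((toInt k).natAbs : ℤ) * 1 = toInt k; omega
    · rw [reducedWord, if_neg h, hB, if_pos (even_two_mul _), one_mul,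
        Nat.mul_div_cancel_left _ (by norm_num), e10, r_pow']
      congr 1; show ((toInt k).natAbs : ℤ) * (-1) = toInt k; omega
  · by_cases h : 0 < toInt k
    · have hm : ¬ Even (2 * (toInt k).natAbs - 1) := by rw [Nat.even_iff]; omega
      have hd : (2 * (toInt k).natAbs - 1) / 2 = (toInt k).natAbs - 1 := by omega
      rw [reducedWord, if_pos h, hA, if_neg hm, hd, e01, r_pow']; erw [sr_mul_r]
      congr 1; show (1 : ℤ) + ((((toInt k).natAbs - 1 : ℕ) : ℤ) * 1) = toInt k; omega
    · have hm : ¬ Even (2 * (toInt k).natAbs + 1) := by rw [Nat.even_iff]; omega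
      have hd : (2 * (toInt k).natAbs + 1) / 2 = (toInt k).natAbs := by omega
      rw [reducedWord, if_neg h, hB, if_neg hm, hd, e10, r_pow']; erw [sr_mul_r]
      congr 1; show (0 : ℤ) + (((toInt k).natAbs : ℤ) * (-1)) = toInt k; omega

lemma length_eq (cs : CoxeterSystem Mmat Dinf) (h0 : cs.simple 0 = sr 0)
    (h1 : cs.simple 1 = sr 1) (t : Dinf) : cs.length t = cLength t := by
  apply le_antisymm
  · have hle := cs.length_wordProd_le (reducedWord t)
    rw [prod_reducedWord cs h0 h1 t] at hle
    refine hle.trans_eq ?_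
    rcases t with k | k <;> rw [reducedWord, cLength] <;> split_ifs <;>
      rw [length_alternatingWord]
  · obtain ⟨w, hw, hwt⟩ := cs.exists_reduced_word t
    calc cLength t = cLength (wprod w) := by rw [hwt, wordProd_eq cs h0 h1]
      _ ≤ w.length := cLength_wprod_le w
      _ = cs.length t := by rw [hwt]; exact hw.symm

lemma count_alt (m : ℕ) :
    ((alternatingWord (0 : Fin 2) 1 m).count 1 = (m + 1) / 2
      ∧ (alternatingWord (0 : Fin 2) 1 m).count 0 = m / 2)
    ∧ ((alternatingWord (1 : Fin 2) 0 m).count 0 = (m + 1) / 2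
      ∧ (alternatingWord (1 : Fin 2) 0 m).count 1 = m / 2) := by
  induction m with
  | zero => simp [alternatingWord]
  | succ n ih =>
    obtain ⟨⟨i1, i2⟩, ⟨i3, i4⟩⟩ := ih
    rw [alternatingWord_succ' (0 : Fin 2) 1 n, alternatingWord_succ' (1 : Fin 2) 0 n]
    by_cases h : Even n
    · have h' : n % 2 = 0 := Nat.even_iff.mp h
      rw [if_pos h, if_pos h]
      simp only [List.count_cons, i1, i2, i3, i4]
      norm_num
      omega
    · have h' : n % 2 = 1 := Nat.odd_iff.mp (Nat.not_even_iff_odd.mp h)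
      rw [if_neg h, if_neg h]
      simp only [List.count_cons, i1, i2, i3, i4]
      norm_num
      omega

lemma φ_sr (k : ZMod 0) :
    φ (sr k) = if 0 < toInt k then ((toInt k).natAbs - 1, (toInt k).natAbs)
      else ((toInt k).natAbs + 1, (toInt k).natAbs) := by
  by_cases h : 0 < toInt k
  · rw [if_pos h]
    unfold φ
    rw [reducedWord, if_pos h, (count_alt _).1.2, (count_alt _).1.1]
    have : 1 ≤ (toInt k).natAbs := by omega
    exact Prod.ext (by omega) (by omega)
  · rw [if_neg h]
    unfold φ
    rw [reducedWord, if_neg h, (count_alt _).2.1, (count_alt _).2.2]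
    exact Prod.ext (by omega) (by omega)


/-- Every root is realized by a unique reflection: for `α = (a, b) ∈ ℕ²` with
`|a - b| = 1` there is a unique reflection `s_α ∈ D∞` with `ℓ(s_α) = a + b`
and `φ(s_α) = (a, b)`. -/
theorem stmt9 (cs : CoxeterSystem Mmat Dinf)
    (h0 : cs.simple 0 = sr 0) (h1 : cs.simple 1 = sr 1)
    (a b : ℕ) (hab : a = b + 1 ∨ b = a + 1) :
    ∃! t : Dinf, IsReflectionD t ∧ cs.length t = a + b ∧ φ t = (a, b) := by
  have key : ∀ k : ZMod 0, cs.length (sr k) = cLength (sr k) :=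
    fun k => length_eq cs h0 h1 (sr k)
  rcases hab with hab | hab
  · -- a = b + 1 : witness sr (-(b : ℤ))
    refine ⟨sr (-(b : ℕ) : ℤ), ⟨⟨_, rfl⟩, ?_, ?_⟩, ?_⟩
    · erw [key]
      simp only [cLength, toInt_coe]
      show (if 0 < -(b:ℤ) then 2 * (-(b:ℤ)).natAbs - 1 else 2 * (-(b:ℤ)).natAbs + 1) = a + b
      rw [if_neg (by omega)]
      omega
    · erw [φ_sr, toInt_coe, if_neg (by omega)]
      rw [Prod.mk.injEq]
      exact ⟨by omega, by omega⟩
    · rintro t' ⟨⟨k', rfl⟩, hlen, hφ⟩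
      rw [φ_sr] at hφ
      have hsr : sr (toInt k') = sr k' := rfl
      rw [← hsr]
      split_ifs at hφ with hk <;> rw [Prod.mk.injEq] at hφ <;>
        obtain ⟨hφ1, hφ2⟩ := hφ
      · exfalso; omega
      · have hkk : toInt k' = (-(b : ℕ) : ℤ) := by omega
        rw [hkk]
  · -- b = a + 1 : witness sr ((b : ℕ) : ℤ)
    refine ⟨sr ((b : ℕ) : ℤ), ⟨⟨_, rfl⟩, ?_, ?_⟩, ?_⟩
    · erw [key]
      simp only [cLength, toInt_coe]
      show (if 0 < (b:ℤ) then 2 * (b:ℤ).natAbs - 1 else 2 * (b:ℤ).natAbs + 1) = a + b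
      rw [if_pos (by omega)]
      omega
    · erw [φ_sr, toInt_coe, if_pos (by omega)]
      rw [Prod.mk.injEq]
      exact ⟨by omega, by omega⟩
    · rintro t' ⟨⟨k', rfl⟩, hlen, hφ⟩
      rw [φ_sr] at hφ
      have hsr : sr (toInt k') = sr k' := rfl
      rw [← hsr]
      split_ifs at hφ with hk <;> rw [Prod.mk.injEq] at hφ <;>
        obtain ⟨hφ1, hφ2⟩ := hφ
      · have hkk : toInt k' = ((b : ℕ) : ℤ) := by omega
        rw [hkk]
      · exfalso; omega
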